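/- arXiv:2506.17092 — 2 statements merged into one kernel-verified Lean document; each statement's English description precedes it below -/
import Mathlib

section
/- The map sending a compact operator on a Banach space to its spectrum (as a subset of ℂ with the Hausdorff distance) is continuous with respect to the operator norm topology. -/
/-!
Upper semicontinuity of the spectrum holds in every Banach algebra. For lower semicontinuity at
`T`, take `λ ∈ σ(T)`. The spectrum of `T` is countable: its nonzero points are eigenvalues, and
for each `c > 0` Riesz's lemma applied to the spans of eigenvectors shows that only finitely many
eigenvalues have modulus `≥ c`. Hence some small circle around `λ` misses `σ(T)`, and the
resolvent of `T` is bounded there by some `M`. For `S` close to `T` the resolvent of `S` is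
bounded by `2M` on that circle; if `σ(S)` missed the enclosed disc, the maximum modulus principle
would bound `(λ - S)⁻¹` by `2M` as well, which forces `λ - T` to be invertible. Compactness of
`σ(T)` makes both semicontinuities uniform, which is continuity for the Hausdorff distance.
-/

open Metric Set Filter Topology Submodule Module End

theorem Module.End.smul_sub_apply_mem_span_image_Iio {R M : Type*} [CommRing R] [AddCommGroup M]
    [Module R M] {f : End R M} {μ : ℕ → R} {x : ℕ → M} (hx : ∀ i, f (x i) = μ i • x i) (n : ℕ)
    {y : M} (hy : y ∈ span R (x '' Iio (n + 1))) : μ n • y - f y ∈ span R (x '' Iio n) := by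
  suffices span R (x '' Iio (n + 1)) ≤ (span R (x '' Iio n)).comap (μ n • 1 - f) from this hy
  rw [span_le]
  rintro _ ⟨i, hi, rfl⟩
  have hfx : (μ n • 1 - f) (x i) = (μ n - μ i) • x i := by simp [hx, sub_smul]
  rw [SetLike.mem_coe, Submodule.mem_comap, hfx]
  rcases Nat.lt_succ_iff_lt_or_eq.mp hi with hi | rfl
  · exact smul_mem _ _ (subset_span ⟨i, hi, rfl⟩)
  · simp

theorem Submodule.exists_norm_eq_one_forall_le_norm_sub {𝕜 E : Type*} [RCLike 𝕜]
    [NormedAddCommGroup E] [NormedSpace 𝕜 E] {Y Z : Submodule 𝕜 E} (hY : IsClosed (Y : Set E))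
    (hYZ : Y < Z) {r : ℝ} (hr : r < 1) : ∃ z ∈ Z, ‖z‖ = 1 ∧ ∀ y ∈ Y, r ≤ ‖z - y‖ := by
  obtain ⟨z, hzZ, hzY⟩ := SetLike.exists_of_lt hYZ
  obtain ⟨z, -, hz, hzr⟩ := riesz_lemma_of_lt_one (F := Y.comap Z.subtype)
    (hY.preimage continuous_subtype_val) ⟨⟨z, hzZ⟩, hzY⟩ hr
  exact ⟨z, z.2, hz, fun y hy => hzr ⟨y, hYZ.le hy⟩ hy⟩

theorem IsCompactOperator.exists_lt_norm_sub_lt {𝕜 E F : Type*} [NontriviallyNormedField 𝕜]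
    [NormedAddCommGroup E] [NormedSpace 𝕜 E] [NormedAddCommGroup F] [NormedSpace 𝕜 F]
    {T : E →L[𝕜] F} (hT : IsCompactOperator T) {z : ℕ → E} {R : ℝ} (hz : ∀ n, ‖z n‖ ≤ R)
    {d : ℝ} (hd : 0 < d) : ∃ m n, m < n ∧ ‖T (z n) - T (z m)‖ < d := by
  obtain ⟨K, hK, hTK⟩ := hT.image_closedBall_subset_compact R
  obtain ⟨y, -, φ, hφ, hy⟩ := hK.tendsto_subseq fun n => hTK ⟨z n, by simpa using hz n, rfl⟩
  obtain ⟨N, hN⟩ := Metric.cauchySeq_iff'.mp hy.cauchySeq d hd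
  exact ⟨φ N, φ (N + 1), hφ N.lt_succ_self, by simpa [dist_eq_norm] using hN (N + 1) N.le_succ⟩

section CompactOperator

variable {𝕜 E : Type*} [RCLike 𝕜] [NormedAddCommGroup E] [NormedSpace 𝕜 E] {T : E →L[𝕜] E}

theorem IsCompactOperator.not_injective_of_hasEigenvector (hT : IsCompactOperator T)
    {μ : ℕ → 𝕜} {x : ℕ → E} (hx : ∀ n, HasEigenvector (T : End 𝕜 E) (μ n) (x n)) {c : ℝ}
    (hc : 0 < c) (hμ : ∀ n, c ≤ ‖μ n‖) : ¬ Function.Injective μ := by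
  intro hμ_inj
  set Y : ℕ → Submodule 𝕜 E := fun n => span 𝕜 (x '' Iio n)
  have hY_mono : Monotone Y := fun m n hmn => span_mono (image_mono (Iio_subset_Iio hmn))
  have hY_lt (n : ℕ) : Y n < Y (n + 1) := by
    refine SetLike.lt_iff_le_and_exists.mpr ⟨hY_mono n.le_succ, x n, ?_, ?_⟩
    · exact subset_span ⟨n, n.lt_succ_self, rfl⟩
    · exact (eigenvectors_linearIndependent' _ μ hμ_inj x hx).notMem_span_image (by simp)
  have hY_closed (n : ℕ) : IsClosed (Y n : Set E) :=
    haveI := FiniteDimensional.span_of_finite 𝕜 ((finite_Iio n).image x)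
    (Y n).closed_of_finiteDimensional
  have hTY (n : ℕ) {y : E} (hy : y ∈ Y (n + 1)) : μ n • y - T y ∈ Y n :=
    smul_sub_apply_mem_span_image_Iio (fun i => (hx i).apply_eq_smul) n hy
  choose z hzY hz hz_far using fun n =>
    exists_norm_eq_one_forall_le_norm_sub (hY_closed n) (hY_lt n) (by norm_num : (1 / 2 : ℝ) < 1)
  obtain ⟨m, n, hmn, hlt⟩ := hT.exists_lt_norm_sub_lt (fun n => (hz n).le) (half_pos hc)
  refine hlt.not_ge ?_
  have hTzm : T (z m) ∈ Y n := by
    have := sub_mem (smul_mem _ (μ m) (hzY m)) (hY_mono m.le_succ (hTY m (hzY m)))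
    exact hY_mono hmn (by rwa [sub_sub_cancel] at this)
  set w := (μ n)⁻¹ • (μ n • z n - T (z n) + T (z m))
  have hw : w ∈ Y n := smul_mem _ _ (add_mem (hTY n (hzY n)) hTzm)
  have hμn : μ n ≠ 0 := norm_pos_iff.mp (hc.trans_le (hμ n))
  have hTz : T (z n) - T (z m) = μ n • (z n - w) := by
    rw [smul_sub, smul_inv_smul₀ hμn]
    abel
  calc c / 2 ≤ ‖μ n‖ * (1 / 2) := by linarith [hμ n]
    _ ≤ ‖μ n‖ * ‖z n - w‖ := by gcongr; exact hz_far n w hw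
    _ = ‖T (z n) - T (z m)‖ := by rw [hTz, norm_smul]

theorem IsCompactOperator.finite_setOf_hasEigenvalue_le_norm (hT : IsCompactOperator T)
    {c : ℝ} (hc : 0 < c) : {μ : 𝕜 | HasEigenvalue (T : End 𝕜 E) μ ∧ c ≤ ‖μ‖}.Finite := by
  by_contra hinf
  let e := Set.Infinite.natEmbedding _ hinf
  choose x hx using fun n => (e n).2.1.exists_hasEigenvector
  exact hT.not_injective_of_hasEigenvector hx hc (fun n => (e n).2.2)
    (Subtype.val_injective.comp e.injective)

theorem IsCompactOperator.countable_spectrum [CompleteSpace E] (hT : IsCompactOperator T) :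
    (spectrum 𝕜 T).Countable := by
  refine ((countable_iUnion fun n : ℕ =>
    (hT.finite_setOf_hasEigenvalue_le_norm (c := 1 / (n + 1)) (by positivity)).countable).insert
      0).mono fun μ hμ => ?_
  rcases eq_or_ne μ 0 with rfl | hμ0
  · exact mem_insert _ _
  obtain ⟨n, hn⟩ := exists_nat_one_div_lt (norm_pos_iff.mpr hμ0)
  exact mem_insert_of_mem _ (mem_iUnion.mpr
    ⟨n, (hT.hasEigenvalue_iff_mem_spectrum hμ0).mpr hμ, hn.le⟩)

end CompactOperator

theorem isUnit_and_norm_inverse_le_of_norm_sub_mul_le {R : Type*} [NormedRing R] [CompleteSpace R]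
    [Nontrivial R] {u v : R} (hu : IsUnit u) {M : ℝ} (huM : ‖Ring.inverse u‖ ≤ M)
    (huv : ‖v - u‖ * M ≤ 1 / 2) : IsUnit v ∧ ‖Ring.inverse v‖ ≤ 2 * M := by
  obtain ⟨u, rfl⟩ := hu
  rw [Ring.inverse_unit] at huM
  have hM : 0 < M := (norm_pos_iff.mpr u⁻¹.ne_zero).trans_le huM
  have hv : IsUnit v := by
    refine (u.ofNearby v ?_).isUnit
    calc ‖v - u‖ ≤ 1 / (2 * M) := by rw [le_div_iff₀ (by positivity)]; linarith
      _ < M⁻¹ := by rw [one_div]; exact inv_strictAnti₀ hM (by linarith)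
      _ ≤ ‖(↑u⁻¹ : R)‖⁻¹ := inv_anti₀ (norm_pos_iff.mpr u⁻¹.ne_zero) huM
  refine ⟨hv, ?_⟩
  set w := Ring.inverse v
  -- `w = u⁻¹ (v + (u - v)) w`
  have hw : w = ↑u⁻¹ + ↑u⁻¹ * ((↑u - v) * w) := by
    rw [sub_mul, Ring.mul_inverse_cancel v hv, mul_sub, mul_one, ← mul_assoc, u.inv_mul, one_mul,
      add_sub_cancel]
  have : ‖w‖ ≤ M + ‖w‖ / 2 := calc
    ‖w‖ ≤ ‖(↑u⁻¹ : R)‖ + ‖(↑u⁻¹ : R)‖ * (‖v - u‖ * ‖w‖) := by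
      rw [norm_sub_rev v]
      nth_rewrite 1 [hw]
      refine (norm_add_le _ _).trans ?_
      gcongr
      exact (norm_mul_le _ _).trans (by gcongr; exact norm_mul_le _ _)
    _ ≤ M + M * (‖v - u‖ * ‖w‖) := by gcongr
    _ ≤ M + ‖w‖ / 2 := by nlinarith [norm_nonneg w]
  linarith

section BanachAlgebra

variable {A : Type*} [NormedRing A] [NormedAlgebra ℂ A] [CompleteSpace A]

theorem spectrum.eventually_nonempty_inter_closedBall {a : A} {z₀ : ℂ}
    (hz₀ : z₀ ∈ spectrum ℂ a) {r : ℝ} (hr : 0 < r) (hsphere : sphere z₀ r ⊆ resolventSet ℂ a) :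
    ∀ᶠ b in 𝓝 a, (spectrum ℂ b ∩ closedBall z₀ r).Nonempty := by
  have : Nontrivial A := not_subsingleton_iff_nontrivial.mp fun _ => by
    simp [spectrum.of_subsingleton] at hz₀
  have hcont : ContinuousOn (resolvent a) (sphere z₀ r) := fun z hz =>
    (hasDerivAt_resolvent_const_left (hsphere hz)).continuousAt.continuousWithinAt
  obtain ⟨M, hM, hMr⟩ :=
    ((isCompact_sphere z₀ r).image_of_continuousOn hcont).isBounded.exists_pos_norm_le
  filter_upwards [ball_mem_nhds a (by positivity : 0 < 1 / (4 * M))] with b hb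
  have hba : ‖b - a‖ * (2 * M) ≤ 1 / 2 := by
    rw [mem_ball, dist_eq_norm, lt_div_iff₀ (by positivity)] at hb
    linarith
  by_contra hempty
  have hball : closedBall z₀ r ⊆ resolventSet ℂ b := fun z hz =>
    not_not.mp fun hzb => hempty ⟨z, hzb, hz⟩
  have hsphere_b (z : ℂ) (hz : z ∈ sphere z₀ r) : ‖resolvent b z‖ ≤ 2 * M := by
    refine (isUnit_and_norm_inverse_le_of_norm_sub_mul_le (hsphere hz)
      (hMr _ (mem_image_of_mem _ hz)) ?_).2
    rw [sub_sub_sub_cancel_left, norm_sub_rev]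
    nlinarith [norm_nonneg (b - a)]
  have hcenter : ‖resolvent b z₀‖ ≤ 2 * M := by
    refine Complex.norm_le_of_forall_mem_frontier_norm_le isBounded_ball
      (DifferentiableOn.diffContOnCl fun z hz => ?_) (fun z hz => hsphere_b z ?_)
      (subset_closure (mem_ball_self hr))
    · rw [closure_ball z₀ hr.ne'] at hz
      exact (hasDerivAt_resolvent_const_left (hball hz)).differentiableAt.differentiableWithinAt
    · rwa [frontier_ball z₀ hr.ne'] at hz
  refine hz₀ (isUnit_and_norm_inverse_le_of_norm_sub_mul_le (hball (mem_closedBall_self hr.le))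
    hcenter ?_).1
  rwa [sub_sub_sub_cancel_left]

theorem spectrum.lowerHemicontinuousAt_of_countable {a : A} (ha : (spectrum ℂ a).Countable) :
    LowerHemicontinuousAt (spectrum ℂ) a := by
  rw [lowerHemicontinuousAt_iff]
  rintro U hU ⟨z₀, hz₀a, hz₀U⟩
  obtain ⟨ε, hε, hεU⟩ := Metric.isOpen_iff.mp hU z₀ hz₀U
  -- Only countably many circles around `z₀` meet the spectrum of `a`.
  obtain ⟨r, hr_avoid, hr⟩ := ((ha.image fun z => dist z z₀).dense_compl ℝ).exists_between hε
  filter_upwards [eventually_nonempty_inter_closedBall hz₀a hr.1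
    fun z hz => not_not.mp fun hza => hr_avoid ⟨z, hza, hz⟩] with b ⟨z, hzb, hz⟩
  exact ⟨z, hzb, hεU (closedBall_subset_ball hr.2 hz)⟩

end BanachAlgebra

theorem eventually_hausdorffDist_lt_of_hemicontinuousAt {α β : Type*} [TopologicalSpace α]
    [PseudoMetricSpace β] {f : α → Set β} {x : α} (hfx : IsCompact (f x))
    (hu : UpperHemicontinuousAt f x) (hl : LowerHemicontinuousAt f x) {ε : ℝ} (hε : 0 < ε) :
    ∀ᶠ y in 𝓝 x, hausdorffDist (f y) (f x) < ε := by
  obtain ⟨t, hts, htf, hcover⟩ := finite_cover_balls_of_compact hfx (by positivity : 0 < ε / 4)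
  have hlower : ∀ᶠ y in 𝓝 x, ∀ p ∈ t, (f y ∩ ball p (ε / 4)).Nonempty :=
    (eventually_all_finite htf).mpr fun p hp =>
      lowerHemicontinuousAt_iff.mp hl _ isOpen_ball ⟨p, hts hp, mem_ball_self (by positivity)⟩
  have hupper : ∀ᶠ y in 𝓝 x, f y ⊆ thickening (ε / 2) (f x) :=
    (upperHemicontinuousAt_iff.mp hu _ (isOpen_thickening.mem_nhdsSet.mpr
      (self_subset_thickening (by positivity) _))).mono fun y hy => subset_of_mem_nhdsSet hy
  filter_upwards [hlower, hupper] with y hyl hyu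
  refine (hausdorffDist_le_of_mem_dist (r := ε / 2) (by positivity) (fun z hz => ?_)
    (fun q hq => ?_)).trans_lt (by linarith)
  · obtain ⟨p, hp, hzp⟩ := mem_thickening_iff.mp (hyu hz)
    exact ⟨p, hp, hzp.le⟩
  · obtain ⟨p, hp, hqp⟩ := mem_iUnion₂.mp (hcover hq)
    obtain ⟨z, hz, hzp⟩ := hyl p hp
    refine ⟨z, hz, (dist_triangle q p z).trans ?_⟩
    rw [mem_ball] at hqp hzp
    rw [dist_comm p z]
    linarith

/-- The map sending a compact operator on a complex Banach space to its spectrum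
(a subset of ℂ, with the Hausdorff distance) is continuous with respect to the
operator norm topology, stated in ε-δ form. -/
theorem spectrum_continuous_on_compact_operators
    (X : Type*) [NormedAddCommGroup X] [NormedSpace ℂ X] [CompleteSpace X]
    (T : X →L[ℂ] X) (hT : IsCompactOperator T) :
    ∀ ε > 0, ∃ δ > 0, ∀ S : X →L[ℂ] X, IsCompactOperator S → ‖S - T‖ < δ →
      Metric.hausdorffDist (spectrum ℂ S) (spectrum ℂ T) < ε := by
  intro ε hε
  obtain ⟨δ, hδ, hclose⟩ := Metric.eventually_nhds_iff.mp <|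
    eventually_hausdorffDist_lt_of_hemicontinuousAt (spectrum.isCompact T)
      (upperHemicontinuous_spectrum ℂ (X →L[ℂ] X) T)
      (spectrum.lowerHemicontinuousAt_of_countable hT.countable_spectrum) hε
  exact ⟨δ, hδ, fun S _ hS => hclose (by rwa [dist_eq_norm])⟩
end

section
/- Every hyperbolic triangle of area at least π/4 contains a point at distance at least arctanh(sin(π/24)) from all three sides (namely, its incenter). -/
set_option maxHeartbeats 1000000


open Real

/-- The inverse hyperbolic tangent, `arctanh x = (1/2) log ((1+x)/(1-x))`. -/
noncomputable def arctanh (x : ℝ) : ℝ := Real.log ((1 + x) / (1 - x)) / 2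

private lemma step2 (a o r : ℝ) (ha : 0 < a) (ha' : a < π / 2) (ho : 0 ≤ o) (ho' : o ≤ π)
    (hrel : Real.cos o = Real.cosh r * Real.sin a) : o ≤ π / 2 - a := by
  by_contra h
  push_neg at h
  have h1 : Real.cos o < Real.cos (π / 2 - a) :=
    Real.strictAntiOn_cos ⟨by linarith, by linarith⟩ ⟨ho, ho'⟩ h
  rw [Real.cos_pi_div_two_sub] at h1
  have h2 : (1:ℝ) ≤ Real.cosh r := Real.one_le_cosh r
  nlinarith [Real.sin_pos_of_pos_of_lt_pi ha (by linarith)]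

private lemma key (a o r : ℝ) (ha : 0 < a) (ha' : a < π / 2) (ho : 0 ≤ o)
    (hrel : Real.cos o = Real.cosh r * Real.sin a) (h : o ≤ π / 2 - a - π / 24) :
    1 ≤ Real.cosh r * Real.cos (π / 24) := by
  have hpi := Real.pi_pos
  set e : ℝ := π / 2 - a - o with he
  have he1 : π / 24 ≤ e := by simp only [he]; linarith
  have he2 : a + e ≤ π / 2 := by simp only [he]; linarith
  have hcos : Real.cos o = Real.sin (a + e) := by
    have : o = π / 2 - (a + e) := by simp only [he]; ring
    rw [this, Real.cos_pi_div_two_sub]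
  have hsa : 0 < Real.sin a := Real.sin_pos_of_pos_of_lt_pi ha (by linarith)
  have hse : 0 ≤ Real.sin e := Real.sin_nonneg_of_nonneg_of_le_pi (by simp only [he]; linarith) (by simp only [he]; linarith)
  have hcae : 0 ≤ Real.cos (a + e) :=
    Real.cos_nonneg_of_mem_Icc ⟨by linarith, he2⟩
  -- cosh r * sin a = sin (a + e), and sin(a+e)*cos e - sin a = sin e * cos(a+e) ≥ 0
  have hexp : Real.sin (a + e) = Real.sin a * Real.cos e + Real.cos a * Real.sin e :=
    Real.sin_add a e
  have hcexp : Real.cos (a + e) = Real.cos a * Real.cos e - Real.sin a * Real.sin e :=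
    Real.cos_add a e
  have hkey : 1 ≤ Real.cosh r * Real.cos e := by
    have h1 : Real.cosh r * Real.sin a = Real.sin a * Real.cos e + Real.cos a * Real.sin e := by
      rw [← hexp, ← hcos, hrel]
    have hpyth : Real.sin e ^ 2 + Real.cos e ^ 2 = 1 := Real.sin_sq_add_cos_sq e
    have hmain : (Real.cosh r * Real.cos e - 1) * Real.sin a
        = Real.sin e * Real.cos (a + e) := by
      linear_combination Real.cos e * h1 - Real.sin e * hcexp + Real.sin a * hpyth
    have h2 : 0 ≤ (Real.cosh r * Real.cos e - 1) * Real.sin a := by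
      rw [hmain]; exact mul_nonneg hse hcae
    nlinarith [h2, hsa]
  have hcc : Real.cos e ≤ Real.cos (π / 24) :=
    Real.cos_le_cos_of_nonneg_of_le_pi (by positivity) (by simp only [he]; linarith) he1
  have hch : 0 < Real.cosh r := Real.cosh_pos r
  nlinarith

/-- Every hyperbolic triangle of area at least `π/4` has inradius at least
`arctanh (sin (π/24))`, i.e. its incenter is at distance at least that from all
three sides.  The triangle is encoded by its three half-angles `a i` at the
vertices; `r` is the distance from the incenter to each of the three sides
(the inradius), `o i` are the angles at the incenter in the six right triangles
cut out by the segments from the incenter to the vertices and to the touching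
points; these satisfy `o 0 + o 1 + o 2 = π` and the hyperbolic right-triangle
identity `cos (o i) = cosh r * sin (a i)`; the area of the triangle is
`π - 2*(a 0 + a 1 + a 2)`. -/
theorem inradius_bound_of_area_ge (a o : Fin 3 → ℝ) (r : ℝ) (hr : 0 ≤ r)
    (ha : ∀ i, 0 < a i) (ha' : ∀ i, a i < π / 2) (ho : ∀ i, 0 ≤ o i)
    (hsum : o 0 + o 1 + o 2 = π)
    (hrel : ∀ i, Real.cos (o i) = Real.cosh r * Real.sin (a i))
    (harea : π / 4 ≤ π - 2 * (a 0 + a 1 + a 2)) :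
    arctanh (Real.sin (π / 24)) ≤ r := by
  have hpi := Real.pi_pos
  have hsa : a 0 + a 1 + a 2 ≤ 3 * π / 8 := by linarith
  have ho0' : o 0 ≤ π := by linarith [ho 1, ho 2]
  have ho1' : o 1 ≤ π := by linarith [ho 0, ho 2]
  have ho2' : o 2 ≤ π := by linarith [ho 0, ho 1]
  have h20 := step2 (a 0) (o 0) r (ha 0) (ha' 0) (ho 0) ho0' (hrel 0)
  have h21 := step2 (a 1) (o 1) r (ha 1) (ha' 1) (ho 1) ho1' (hrel 1)
  have h22 := step2 (a 2) (o 2) r (ha 2) (ha' 2) (ho 2) ho2' (hrel 2)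
  -- find an index with o i ≤ π/2 - a i - π/24
  have hkey : 1 ≤ Real.cosh r * Real.cos (π / 24) := by
    by_cases h0 : o 0 ≤ π / 2 - a 0 - π / 24
    · exact key (a 0) (o 0) r (ha 0) (ha' 0) (ho 0) (hrel 0) h0
    by_cases h1 : o 1 ≤ π / 2 - a 1 - π / 24
    · exact key (a 1) (o 1) r (ha 1) (ha' 1) (ho 1) (hrel 1) h1
    have h2 : o 2 ≤ π / 2 - a 2 - π / 24 := by
      push_neg at h0 h1; linarith
    exact key (a 2) (o 2) r (ha 2) (ha' 2) (ho 2) (hrel 2) h2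
  -- now translate to arctanh bound
  set s : ℝ := Real.sin (π / 24) with hs
  set c : ℝ := Real.cos (π / 24) with hc
  have hs0 : 0 < s := Real.sin_pos_of_pos_of_lt_pi (by positivity) (by linarith)
  have hc0 : 0 < c := Real.cos_pos_of_mem_Ioo ⟨by linarith, by linarith⟩
  have hpyth : s ^ 2 + c ^ 2 = 1 := Real.sin_sq_add_cos_sq _
  have hs1 : s < 1 := by nlinarith
  set E : ℝ := Real.exp r with hE
  have hE0 : 0 < E := Real.exp_pos r
  have hE1 : 1 ≤ E := Real.one_le_exp hr
  have hEinv : E * E⁻¹ = 1 := mul_inv_cancel₀ hE0.ne'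
  have hcosh : Real.cosh r = (E + E⁻¹) / 2 := by
    rw [Real.cosh_eq, Real.exp_neg]
  rw [hcosh] at hkey
  -- c * (E^2 + 1) ≥ 2 E
  have hq : 2 * E ≤ c * (E ^ 2 + 1) := by nlinarith
  -- s + c > 1
  have hsc : 1 < s + c := by nlinarith
  -- c E ≥ 1 + s
  have hce : 1 + s ≤ c * E := by nlinarith [mul_pos (sub_pos.mpr (show 1 - s < c * E by nlinarith)) hc0]
  -- (1+s)/(1-s) ≤ E^2
  have hdiv : (1 + s) / (1 - s) ≤ E ^ 2 := by
    rw [div_le_iff₀ (by linarith : (0:ℝ) < 1 - s)]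
    have hsq : (1 + s) * (1 + s) ≤ (c * E) * (c * E) :=
      mul_le_mul hce hce (by linarith) (mul_nonneg hc0.le hE0.le)
    nlinarith [hsq, hpyth, hs0, hs1]
  have hlog : Real.log ((1 + s) / (1 - s)) ≤ 2 * r := by
    calc Real.log ((1 + s) / (1 - s)) ≤ Real.log (E ^ 2) :=
          Real.log_le_log (div_pos (by linarith) (by linarith)) hdiv
      _ = 2 * r := by
          rw [Real.log_pow, Real.log_exp]; push_cast; ring
  simp only [arctanh]
  linarith
end
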